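/- arXiv:2111.11197 — 2 statements merged into one kernel-verified Lean document; each statement's English description precedes it below -/
import Mathlib

section
/- If M : Ω → ℝ³ is smooth (on an open set Ω ⊆ ℝ^d) and A is a constant symmetric d × d real matrix, then M × (∇·(∇M A)) = ∇·(M × (∇M A)), i.e., the cross product of M with the row-wise divergence of the matrix ∇M·A equals the row-wise divergence of the matrix whose columns are M crossed with the columns of ∇M·A. -/
open scoped BigOperators

/-- Cross product on `EuclideanSpace ℝ (Fin 3)`. -/
noncomputable def cross3 (a b : EuclideanSpace ℝ (Fin 3)) : EuclideanSpace ℝ (Fin 3) :=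
  WithLp.toLp 2 (crossProduct (a : Fin 3 → ℝ) (b : Fin 3 → ℝ))

/-- Partial derivative `∂ᵢ M` in coordinate direction `i`. -/
noncomputable def pderiv {d : ℕ} (M : EuclideanSpace ℝ (Fin d) → EuclideanSpace ℝ (Fin 3))
    (i : Fin d) (x : EuclideanSpace ℝ (Fin d)) : EuclideanSpace ℝ (Fin 3) :=
  fderiv ℝ M x (EuclideanSpace.single i 1)

/-- Row-wise divergence of a `3 × d` matrix field given by its columns:
`(div G)(x) = Σᵢ ∂ᵢ (i-th column of G)(x)`. -/
noncomputable def divCols {d : ℕ}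
    (G : EuclideanSpace ℝ (Fin d) → Fin d → EuclideanSpace ℝ (Fin 3))
    (x : EuclideanSpace ℝ (Fin d)) : EuclideanSpace ℝ (Fin 3) :=
  ∑ i, fderiv ℝ (fun y => G y i) x (EuclideanSpace.single i 1)

/-- The `i`-th column of the matrix `∇M A`: `Σⱼ Aⱼᵢ ∂ⱼ M`. -/
noncomputable def gradMulCol {d : ℕ} (A : Matrix (Fin d) (Fin d) ℝ)
    (M : EuclideanSpace ℝ (Fin d) → EuclideanSpace ℝ (Fin 3))
    (x : EuclideanSpace ℝ (Fin d)) (i : Fin d) : EuclideanSpace ℝ (Fin 3) :=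
  ∑ j, A j i • pderiv M j x

/-!
By the Leibniz rule, `∇·(M × ∇M A) = Σᵢ ∂ᵢM × (∇M A)ᵢ + M × ∇·(∇M A)`. The first sum equals
`Σᵢⱼ Aⱼᵢ (∂ᵢM × ∂ⱼM)`, which vanishes because `A` is symmetric and `×` is antisymmetric.
-/

local notation "E³" => EuclideanSpace ℝ (Fin 3)

noncomputable def cross3CLM : E³ →L[ℝ] E³ →L[ℝ] E³ :=
  LinearMap.toContinuousBilinearMap <|
    ((crossProduct (R := ℝ)).compl₁₂ (WithLp.linearEquiv 2 ℝ (Fin 3 → ℝ)).toLinearMap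
      (WithLp.linearEquiv 2 ℝ (Fin 3 → ℝ)).toLinearMap).compr₂
      (WithLp.linearEquiv 2 ℝ (Fin 3 → ℝ)).symm.toLinearMap

@[simp]
lemma cross3CLM_apply (a b : E³) : cross3CLM a b = cross3 a b := rfl

lemma cross3_anticomm (a b : E³) : -cross3 a b = cross3 b a := by
  simp only [cross3, ← WithLp.toLp_neg, cross_anticomm]

lemma sum_sum_smul_eq_zero_of_isSymm {ι R F : Type*} [Fintype ι] [Field R] [CharZero R]
    [AddCommGroup F] [Module R F]
    {A : Matrix ι ι R} (hA : A.IsSymm) {f : ι → ι → F} (hf : ∀ i j, -f i j = f j i) :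
    ∑ i, ∑ j, A j i • f i j = 0 := by
  have := IsAddTorsionFree.of_isTorsionFree R F
  refine self_eq_neg.mp ?_
  calc ∑ i, ∑ j, A j i • f i j = ∑ i, ∑ j, A i j • f j i := Finset.sum_comm
    _ = -∑ i, ∑ j, A j i • f i j := by
      simp only [← Finset.sum_neg_distrib, ← smul_neg, hf]
      exact Finset.sum_congr rfl fun i _ ↦ Finset.sum_congr rfl fun j _ ↦ by rw [hA.apply]

lemma cross3_gradMulCol {d : ℕ} (A : Matrix (Fin d) (Fin d) ℝ)
    (M : EuclideanSpace ℝ (Fin d) → E³) (x : EuclideanSpace ℝ (Fin d)) (v : E³) (i : Fin d) :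
    cross3 v (gradMulCol A M x i) = ∑ j, A j i • cross3 v (pderiv M j x) := by
  simp only [gradMulCol, ← cross3CLM_apply, map_sum, map_smul]

lemma divCols_cross3 {d : ℕ} {f : EuclideanSpace ℝ (Fin d) → E³}
    {G : EuclideanSpace ℝ (Fin d) → Fin d → E³} {x : EuclideanSpace ℝ (Fin d)}
    (hf : DifferentiableAt ℝ f x) (hG : ∀ i, DifferentiableAt ℝ (fun y ↦ G y i) x) :
    divCols (fun y i ↦ cross3 (f y) (G y i)) x =
      ∑ i, cross3 (pderiv f i x) (G x i) + cross3 (f x) (divCols G x) := by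
  simp only [divCols, pderiv, ← cross3CLM_apply, cross3CLM.fderiv_of_bilinear hf (hG _),
    map_sum, add_apply, ContinuousLinearMap.precompR_apply, ContinuousLinearMap.precompL_apply,
    ContinuousLinearMap.compL_apply, ContinuousLinearMap.comp_apply, Finset.sum_add_distrib]
  exact add_comm _ _

lemma ContDiffAt.differentiableAt_gradMulCol {d : ℕ} {A : Matrix (Fin d) (Fin d) ℝ}
    {M : EuclideanSpace ℝ (Fin d) → E³} {x : EuclideanSpace ℝ (Fin d)} (hM : ContDiffAt ℝ 2 M x)
    (i : Fin d) : DifferentiableAt ℝ (fun y ↦ gradMulCol A M y i) x := by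
  have hDM : DifferentiableAt ℝ (fderiv ℝ M) x :=
    (hM.fderiv_right (m := 1) (by norm_num)).differentiableAt one_ne_zero
  unfold gradMulCol pderiv
  fun_prop

/-- For `M` smooth on an open set and `A` constant symmetric,
`M × (∇·(∇M A)) = ∇·(M × (∇M A))`. -/
theorem cross_div_eq_div_cross {d : ℕ} (Ω : Set (EuclideanSpace ℝ (Fin d)))
    (hΩ : IsOpen Ω) (M : EuclideanSpace ℝ (Fin d) → EuclideanSpace ℝ (Fin 3))
    (hM : ContDiffOn ℝ 2 M Ω) (A : Matrix (Fin d) (Fin d) ℝ) (hA : A.transpose = A) :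
    ∀ x ∈ Ω,
      cross3 (M x) (divCols (gradMulCol A M) x) =
        divCols (fun y i => cross3 (M y) (gradMulCol A M y i)) x := by
  intro x hx
  have hM₂ : ContDiffAt ℝ 2 M x := hM.contDiffAt (hΩ.mem_nhds hx)
  rw [divCols_cross3 (hM₂.differentiableAt two_ne_zero) hM₂.differentiableAt_gradMulCol]
  simp only [cross3_gradMulCol]
  rw [sum_sum_smul_eq_zero_of_isSymm hA fun _ _ ↦ cross3_anticomm _ _, zero_add]
end

section
/- If k ∈ K^{p,q} with q ≥ 0 (so k ∈ C^q_c with supp k = [-1,1]) and f is 1-periodic and continuously differentiable, then |∫ k_μ(x) f(x/ε) dx − ∫₀¹ f(y) dy| → 0 as ε/μ → 0; specifically for k of compact support in C^1 and f 1-periodic C^1, the averaging against k_μ of the ε-oscillatory function converges to the mean of f. -/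
/-!
Substituting `y = x / μ` turns the integral into `∫ k y * f (y / δ)` with `δ = ε / μ`, and since
`∫ k = 1` the error is `∫ k y * g (y / δ)` for the mean-zero function `g = f - f̄`. The primitive
of a mean-zero periodic function is periodic, hence bounded by some `B`, so the primitive of
`y ↦ g (y / δ)` is bounded by `δ B`. Integrating by parts against `k`, which vanishes outside
`[-1, 1]`, moves the derivative onto `k` and gives an error of at most `4 ‖k'‖∞ B δ`.
-/

open MeasureTheory intervalIntegral Set

namespace Function.Periodic

variable {E : Type*} [NormedAddCommGroup E] [NormedSpace ℝ E] {g : ℝ → E} {T : ℝ}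

theorem primitive_periodic_of_integral_eq_zero (hg : Periodic g T)
    (hint : ∀ a b, IntervalIntegrable g volume a b) (hmean : ∫ x in 0..T, g x = 0) :
    Periodic (fun u ↦ ∫ x in 0..u, g x) T := fun u ↦ by
  simp only [hg.intervalIntegral_add_eq_add 0 u hint, zero_add, hmean, add_zero]

theorem exists_norm_primitive_le_of_integral_eq_zero (hg : Periodic g T) (hT : T ≠ 0)
    (hcont : Continuous g) (hmean : ∫ x in 0..T, g x = 0) :
    ∃ B, ∀ u, ‖∫ x in 0..u, g x‖ ≤ B := by
  have hprim := hg.primitive_periodic_of_integral_eq_zero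
    (fun a b ↦ hcont.intervalIntegrable a b) hmean
  obtain ⟨B, hB⟩ := isBounded_iff_forall_norm_le.mp <|
    hprim.isBounded_of_continuous hT (continuous_primitive (hcont.intervalIntegrable ·) 0)
  exact ⟨B, fun u ↦ hB _ (mem_range_self u)⟩

end Function.Periodic

theorem intervalIntegral_sub_mean_eq_zero {f : ℝ → ℝ} (hf : Continuous f) :
    ∫ x in (0:ℝ)..1, (f x - ∫ y in (0:ℝ)..1, f y) = 0 := by
  rw [integral_sub (hf.intervalIntegrable _ _) intervalIntegrable_const]
  simp

theorem abs_primitive_comp_div_le {g : ℝ → ℝ} {B δ : ℝ} (hB : ∀ u, |∫ x in (0:ℝ)..u, g x| ≤ B)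
    (hδ : 0 < δ) (u : ℝ) : |∫ x in (0:ℝ)..u, g (x / δ)| ≤ δ * B := by
  rw [integral_comp_div g hδ.ne', zero_div, smul_eq_mul, abs_mul, abs_of_pos hδ]
  exact mul_le_mul_of_nonneg_left (hB _) hδ.le

theorem abs_integral_mul_le_of_abs_primitive_le {k h : ℝ → ℝ} {a b C M : ℝ}
    (hk : ContDiff ℝ 1 k) (ha : k a = 0) (hb : k b = 0) (hh : Continuous h)
    (hC : ∀ x ∈ uIcc a b, |deriv k x| ≤ C) (hM : ∀ u, |∫ x in (0:ℝ)..u, h x| ≤ M) :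
    |∫ x in a..b, k x * h x| ≤ C * M * |b - a| := by
  set H : ℝ → ℝ := fun u ↦ ∫ x in (0:ℝ)..u, h x
  have hibp : ∫ x in a..b, k x * h x = -∫ x in a..b, deriv k x * H x := by
    rw [integral_mul_deriv_eq_deriv_mul (u := k) (v := H)
      (fun x _ ↦ (hk.differentiable one_ne_zero x).hasDerivAt)
      (fun x _ ↦ (hh.integral_hasStrictDerivAt 0 x).hasDerivAt)
      (hk.continuous_deriv_one.intervalIntegrable a b) (hh.intervalIntegrable a b), ha, hb]
    ring
  rw [hibp, abs_neg, ← Real.norm_eq_abs]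
  refine intervalIntegral.norm_integral_le_of_norm_le_const fun x hx ↦ ?_
  have hCx := hC x (uIoc_subset_uIcc hx)
  rw [Real.norm_eq_abs, abs_mul]
  exact mul_le_mul hCx (hM x) (abs_nonneg _) ((abs_nonneg _).trans hCx)

theorem integral_scaled_kernel_mul_comp_div (k f : ℝ → ℝ) {ε μ : ℝ} (hμ : 0 < μ) :
    ∫ x, (1 / μ) * k (x / μ) * f (x / ε) = ∫ y, k y * f (y / (ε / μ)) := by
  simp_rw [mul_assoc, ← div_div_div_cancel_right₀ hμ.ne' _ ε]
  rw [MeasureTheory.integral_const_mul,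
    Measure.integral_comp_div (fun y ↦ k y * f (y / (ε / μ))) μ, abs_of_pos hμ,
    smul_eq_mul, ← mul_assoc, one_div_mul_cancel hμ.ne', one_mul]

-- `(-2, 2]` rather than `[-1, 1]`, so that `k` vanishes at the endpoints by hypothesis alone.
theorem support_subset_Ioc_of_eq_zero_of_one_lt_abs {k : ℝ → ℝ}
    (hsupp : ∀ x : ℝ, 1 < |x| → k x = 0) : Function.support k ⊆ Ioc (-2) 2 := by
  intro x hx
  by_contra hx'
  refine hx (hsupp x ?_)
  rw [mem_Ioc, not_and_or, not_lt, not_le] at hx'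
  rw [lt_abs]
  rcases hx' with hx' | hx'
  · right; linarith
  · left; linarith

theorem integral_mul_sub_eq_intervalIntegral_mul_sub {k h : ℝ → ℝ} {a b : ℝ} (hk : Continuous k)
    (hh : Continuous h) (hsupp : Function.support k ⊆ Ioc a b) (hone : ∫ x, k x = 1) (c : ℝ) :
    (∫ x, k x * h x) - c = ∫ x in a..b, k x * (h x - c) := by
  have hmass : ∫ x in a..b, k x = 1 := by
    rw [integral_eq_integral_of_support_subset hsupp, hone]
  simp_rw [mul_sub]
  rw [integral_sub (f := fun x ↦ k x * h x) (g := fun x ↦ k x * c)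
    ((hk.mul hh).intervalIntegrable _ _) ((hk.mul continuous_const).intervalIntegrable _ _),
    intervalIntegral.integral_mul_const, hmass, one_mul, integral_eq_integral_of_support_subset
      ((Function.support_mul_subset_left _ _).trans hsupp)]

/-- Averaging an `ε`-oscillatory periodic function against a scaled `C¹` kernel
converges to the mean of the function: there is a constant `C` (depending on `k`
and `f`) such that for all `0 < ε < μ`,
`|∫ k_μ(x) f(x/ε) dx − ∫₀¹ f| ≤ C (ε/μ)`. -/
theorem kernel_averaging_periodic (k f : ℝ → ℝ)
    (hk : ContDiff ℝ 1 k)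
    (hsupp : ∀ x : ℝ, 1 < |x| → k x = 0)
    (hone : ∫ x, k x = 1)
    (hf : Continuous f) (hper : Function.Periodic f 1) :
    ∃ C : ℝ, 0 ≤ C ∧ ∀ ε μ : ℝ, 0 < ε → ε < μ →
      |(∫ x, (1 / μ) * k (x / μ) * f (x / ε)) - ∫ y in (0:ℝ)..1, f y| ≤
        C * (ε / μ) := by
  set c := ∫ y in (0:ℝ)..1, f y
  have hper' : Function.Periodic (fun x ↦ f x - c) 1 := fun x ↦ by simp only [hper x]
  obtain ⟨B, hB⟩ := hper'.exists_norm_primitive_le_of_integral_eq_zero one_ne_zero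
    (hf.sub continuous_const) (intervalIntegral_sub_mean_eq_zero hf)
  obtain ⟨C, hC⟩ := (isCompact_uIcc (a := (-2 : ℝ)) (b := 2)).exists_bound_of_continuousOn
    hk.continuous_deriv_one.continuousOn
  have hB0 : 0 ≤ B := (norm_nonneg _).trans (hB 0)
  have hC0 : 0 ≤ C := (norm_nonneg _).trans (hC 0 (by simp [uIcc_of_le]))
  refine ⟨4 * C * B, by positivity, fun ε μ hε hεμ ↦ ?_⟩
  have hμ : 0 < μ := hε.trans hεμ
  have hδ : 0 < ε / μ := div_pos hε hμ
  have hcomp : Continuous fun y ↦ f (y / (ε / μ)) := hf.comp (continuous_id.div_const _)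
  rw [integral_scaled_kernel_mul_comp_div k f hμ, integral_mul_sub_eq_intervalIntegral_mul_sub
    hk.continuous hcomp (support_subset_Ioc_of_eq_zero_of_one_lt_abs hsupp) hone c]
  calc _ ≤ C * (ε / μ * B) * |2 - (-2)| :=
        abs_integral_mul_le_of_abs_primitive_le hk (hsupp _ (by norm_num)) (hsupp _ (by norm_num))
          (hcomp.sub continuous_const) hC (abs_primitive_comp_div_le hB hδ)
    _ = 4 * C * B * (ε / μ) := by norm_num; ring
end
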